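/- The map Δ ↦ θ̂(Δ) is differentiable at Δ = 0 with derivative C(x) = 4(φ(x)² + x·φ(x)·(2Φ(x)−1) − x²·Φ(x)·(1−Φ(x))), where x = (μ2−μ1)/2; that is, θ̂(Δ) = θ* + C(x)·Δ + o(Δ) as Δ → 0. -/

import Mathlib

/-!
The truncated Gaussian integrals have closed forms in `Φ` and `φ`, so the left mass `D(Δ)`, the
left moment `N(Δ)` and the total moment `M(Δ) = p1 μ1 + p2 μ2` of `f_Δ` are differentiable, and
`θ̂ = (N/D + (M - N)/(1 - D))/2`. At `Δ = 0` the split is balanced, `D(0) = 1/2`, and the two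
first-order contributions of `N` cancel, leaving `θ̂'(0) = M' + 2 D' (M - 2N)`. With `M' = -x²`,
`D' = φ(x) + x(2Φ(x) - 1)/2` and `M - 2N = x(2Φ(x) - 1) + 2φ(x)` this is `C(x)`.
-/

/-- The standard normal density `φ`. -/
noncomputable def stdGauss (t : ℝ) : ℝ :=
  (Real.sqrt (2 * Real.pi))⁻¹ * Real.exp (-t ^ 2 / 2)

/-- The standard normal CDF `Φ`. -/
noncomputable def stdCDF (t : ℝ) : ℝ := ∫ s in Set.Iic t, stdGauss s

/-- The (pseudo-)prior of the head class: `p1(Δ) = e^{2xΔ}/(1+e^{2xΔ})`, `x = (μ2−μ1)/2`. -/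
noncomputable def pHead (x Δ : ℝ) : ℝ := Real.exp (2 * x * Δ) / (1 + Real.exp (2 * x * Δ))

/-- The (pseudo-)prior of the tail class: `p2(Δ) = 1/(1+e^{2xΔ})`, `x = (μ2−μ1)/2`. -/
noncomputable def pTail (x Δ : ℝ) : ℝ := 1 / (1 + Real.exp (2 * x * Δ))

/-- The mixture density `f_Δ(t) = p1(Δ)·φ(t−μ1) + p2(Δ)·φ(t−μ2)`. -/
noncomputable def mixDensity (μ1 μ2 Δ t : ℝ) : ℝ :=
  pHead ((μ2 - μ1) / 2) Δ * stdGauss (t - μ1) + pTail ((μ2 - μ1) / 2) Δ * stdGauss (t - μ2)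

/-- The conditional mean `m1(Δ)` of `f_Δ` to the left of the boundary `θ* + Δ`. -/
noncomputable def mLeft (μ1 μ2 Δ : ℝ) : ℝ :=
  (∫ t in Set.Iic ((μ1 + μ2) / 2 + Δ), t * mixDensity μ1 μ2 Δ t) /
    ∫ t in Set.Iic ((μ1 + μ2) / 2 + Δ), mixDensity μ1 μ2 Δ t

/-- The conditional mean `m2(Δ)` of `f_Δ` to the right of the boundary `θ* + Δ`. -/
noncomputable def mRight (μ1 μ2 Δ : ℝ) : ℝ :=
  (∫ t in Set.Ioi ((μ1 + μ2) / 2 + Δ), t * mixDensity μ1 μ2 Δ t) /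
    ∫ t in Set.Ioi ((μ1 + μ2) / 2 + Δ), mixDensity μ1 μ2 Δ t

/-- The progressively-balanced-sampling update `θ̂(Δ) = (m1(Δ) + m2(Δ))/2`. -/
noncomputable def pbsUpdate (μ1 μ2 Δ : ℝ) : ℝ := (mLeft μ1 μ2 Δ + mRight μ1 μ2 Δ) / 2

/-- The contraction factor `C(x)`. -/
noncomputable def contractionC (x : ℝ) : ℝ :=
  4 * (stdGauss x ^ 2 + x * stdGauss x * (2 * stdCDF x - 1) -
    x ^ 2 * stdCDF x * (1 - stdCDF x))

open MeasureTheory Filter Set Real Topology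

lemma stdGauss_neg (t : ℝ) : stdGauss (-t) = stdGauss t := by
  simp [stdGauss]

lemma hasDerivAt_stdGauss (t : ℝ) : HasDerivAt stdGauss (-t * stdGauss t) t := by
  have hq : HasDerivAt (fun s : ℝ => -s ^ 2 / 2) (-t) t :=
    ((hasDerivAt_pow 2 t).neg.div_const 2).congr_deriv (by push_cast; ring)
  exact (hq.exp.const_mul _).congr_deriv (by rw [stdGauss]; ring)

lemma differentiable_stdGauss : Differentiable ℝ stdGauss :=
  fun t => (hasDerivAt_stdGauss t).differentiableAt

lemma stdGauss_eq_mul_exp (t : ℝ) : stdGauss t = (√(2 * π))⁻¹ * exp (-(2⁻¹) * t ^ 2) := by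
  rw [stdGauss]; ring_nf

lemma integrable_stdGauss : Integrable stdGauss := by
  rw [funext stdGauss_eq_mul_exp]
  exact (integrable_exp_neg_mul_sq (by norm_num : (0:ℝ) < 2⁻¹)).const_mul (√(2 * π))⁻¹

lemma integrable_mul_stdGauss : Integrable (fun t => t * stdGauss t) := by
  refine ((integrable_mul_exp_neg_mul_sq (by norm_num : (0:ℝ) < 2⁻¹)).const_mul
    (√(2 * π))⁻¹).congr (ae_of_all _ fun t => ?_)
  simp only [stdGauss_eq_mul_exp]; ring

lemma integral_stdGauss : ∫ t, stdGauss t = 1 := by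
  simp only [stdGauss_eq_mul_exp]
  rw [integral_const_mul, integral_gaussian, show π / 2⁻¹ = 2 * π by ring,
    inv_mul_cancel₀ (by positivity)]

lemma integral_mul_stdGauss : ∫ t, t * stdGauss t = 0 := by
  have h := integral_eq_zero_of_hasDerivAt_of_integrable hasDerivAt_stdGauss
    (by simpa only [neg_mul] using
      (integrable_mul_stdGauss.neg : Integrable fun t => -(t * stdGauss t)))
    integrable_stdGauss
  simpa only [neg_mul, integral_neg, neg_eq_zero] using h

lemma tendsto_stdGauss_atBot : Tendsto stdGauss atBot (𝓝 0) :=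
  tendsto_zero_of_hasDerivAt_of_integrableOn_Iic (a := 0) (fun t _ => hasDerivAt_stdGauss t)
    (by simpa only [neg_mul] using
      (integrable_mul_stdGauss.neg : Integrable fun t => -(t * stdGauss t)).integrableOn)
    integrable_stdGauss.integrableOn

lemma hasDerivAt_stdCDF (t : ℝ) : HasDerivAt stdCDF (stdGauss t) t := by
  have h : HasDerivAt (fun s => stdCDF 0 + ∫ u in (0:ℝ)..s, stdGauss u) (stdGauss t) t :=
    (intervalIntegral.integral_hasDerivAt_right
      (differentiable_stdGauss.continuous.intervalIntegrable _ _)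
      (differentiable_stdGauss.continuous.stronglyMeasurableAtFilter _ _)
      differentiable_stdGauss.continuous.continuousAt).const_add _
  refine h.congr_of_eventuallyEq (Eventually.of_forall fun s => ?_)
  show stdCDF s = stdCDF 0 + _
  rw [← intervalIntegral.integral_Iic_sub_Iic integrable_stdGauss.integrableOn
    integrable_stdGauss.integrableOn, stdCDF, stdCDF, add_sub_cancel]

lemma differentiable_stdCDF : Differentiable ℝ stdCDF :=
  fun t => (hasDerivAt_stdCDF t).differentiableAt

lemma tendsto_stdCDF_atBot : Tendsto stdCDF atBot (𝓝 0) :=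
  tendsto_integral_Iic_zero tendsto_id

lemma stdCDF_neg (t : ℝ) : stdCDF (-t) = 1 - stdCDF t := by
  have h := intervalIntegral.integral_Iic_add_Ioi (b := t) integrable_stdGauss.integrableOn
    integrable_stdGauss.integrableOn
  rw [integral_stdGauss] at h
  rw [stdCDF, ← integral_comp_neg_Ioi, ← h, stdCDF]
  simp only [stdGauss_neg, add_sub_cancel_left]

lemma integrable_mul_stdGauss_sub (μ : ℝ) : Integrable (fun t => t * stdGauss (t - μ)) :=
  ((integrable_mul_stdGauss.comp_sub_right μ).add
    ((integrable_stdGauss.comp_sub_right μ).const_mul μ)).congr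
    (ae_of_all _ fun t => by simp only [Pi.add_apply]; ring)

lemma integral_Iic_stdGauss_sub (μ c : ℝ) :
    ∫ t in Iic c, stdGauss (t - μ) = stdCDF (c - μ) := by
  have h := integral_Iic_of_hasDerivAt_of_tendsto' (f := fun s => stdCDF (s - μ)) (a := c)
    (fun t _ => (hasDerivAt_stdCDF (t - μ)).comp_sub_const t μ)
    (integrable_stdGauss.comp_sub_right μ).integrableOn
    (tendsto_stdCDF_atBot.comp (tendsto_atBot_add_const_right _ (-μ) tendsto_id))
  simpa using h

lemma integral_Iic_mul_stdGauss_sub (μ c : ℝ) :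
    ∫ t in Iic c, t * stdGauss (t - μ) = μ * stdCDF (c - μ) - stdGauss (c - μ) := by
  have hF : ∀ t, HasDerivAt (fun s => μ * stdCDF (s - μ) - stdGauss (s - μ))
      (t * stdGauss (t - μ)) t := fun t =>
    (((hasDerivAt_stdCDF (t - μ)).comp_sub_const t μ).const_mul μ).sub
      ((hasDerivAt_stdGauss (t - μ)).comp_sub_const t μ) |>.congr_deriv (by ring)
  have hlim : Tendsto (fun s => μ * stdCDF (s - μ) - stdGauss (s - μ)) atBot (𝓝 0) := by
    have hshift := tendsto_atBot_add_const_right atBot (-μ) tendsto_id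
    simpa [← sub_eq_add_neg] using
      ((tendsto_stdCDF_atBot.comp hshift).const_mul μ).sub (tendsto_stdGauss_atBot.comp hshift)
  simpa using integral_Iic_of_hasDerivAt_of_tendsto' (a := c) (fun t _ => hF t)
    (integrable_mul_stdGauss_sub μ).integrableOn hlim

lemma integral_mul_stdGauss_sub (μ : ℝ) : ∫ t, t * stdGauss (t - μ) = μ := by
  have h : (fun t => t * stdGauss (t - μ)) =
      fun t => (t - μ) * stdGauss (t - μ) + μ * stdGauss (t - μ) := by
    ext t; ring
  rw [h, integral_add (integrable_mul_stdGauss.comp_sub_right μ)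
      ((integrable_stdGauss.comp_sub_right μ).const_mul μ), integral_const_mul,
    integral_sub_right_eq_self (fun t => t * stdGauss t), integral_sub_right_eq_self stdGauss,
    integral_mul_stdGauss, integral_stdGauss]
  ring

lemma hasDerivAt_avg_div_add_sub_div_one_sub_of_eq_half {N D M : ℝ → ℝ} {d m a : ℝ}
    (hN : DifferentiableAt ℝ N a) (hD : HasDerivAt D d a) (hM : HasDerivAt M m a)
    (hDa : D a = 1 / 2) :
    HasDerivAt (fun t => (N t / D t + (M t - N t) / (1 - D t)) / 2)
      (m + 2 * d * (M a - 2 * N a)) a := by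
  have h := ((hN.hasDerivAt.div hD (by norm_num [hDa])).add
    ((hM.sub hN.hasDerivAt).div (hD.const_sub 1) (by norm_num [hDa]))).div_const 2
  refine h.congr_deriv ?_
  rw [hDa, Pi.sub_apply]
  ring

lemma pHead_add_pTail (x Δ : ℝ) : pHead x Δ + pTail x Δ = 1 := by
  rw [pHead, pTail, ← add_div, add_comm, div_self (by positivity)]

lemma pHead_zero (x : ℝ) : pHead x 0 = 1 / 2 := by
  norm_num [pHead]

lemma pTail_zero (x : ℝ) : pTail x 0 = 1 / 2 := by
  norm_num [pTail]

lemma hasDerivAt_pHead (x Δ : ℝ) :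
    HasDerivAt (pHead x) (2 * x * pHead x Δ * pTail x Δ) Δ := by
  have he : HasDerivAt (fun Δ => exp (2 * x * Δ)) (exp (2 * x * Δ) * (2 * x)) Δ :=
    ((hasDerivAt_id Δ).const_mul (2 * x)).exp.congr_deriv (by simp)
  have hpos : 1 + exp (2 * x * Δ) ≠ 0 := by positivity
  refine (he.div (he.const_add 1) hpos).congr_deriv ?_
  rw [pHead, pTail]
  field_simp
  ring

lemma hasDerivAt_pTail (x Δ : ℝ) :
    HasDerivAt (pTail x) (-(2 * x * pHead x Δ * pTail x Δ)) Δ :=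
  ((hasDerivAt_pHead x Δ).const_sub 1).congr_of_eventuallyEq
    (Eventually.of_forall fun Δ => eq_sub_of_add_eq' (pHead_add_pTail x Δ))

section Mixture

variable (μ1 μ2 : ℝ)

lemma integral_mixDensity_eq {ν : Measure ℝ} (hν : ν ≤ volume) (Δ : ℝ) :
    ∫ t, mixDensity μ1 μ2 Δ t ∂ν =
      pHead ((μ2 - μ1) / 2) Δ * ∫ t, stdGauss (t - μ1) ∂ν +
        pTail ((μ2 - μ1) / 2) Δ * ∫ t, stdGauss (t - μ2) ∂ν := by
  simp only [mixDensity]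
  rw [integral_add, integral_const_mul, integral_const_mul]
  all_goals exact ((integrable_stdGauss.comp_sub_right _).mono_measure hν).const_mul _

lemma integral_mul_mixDensity_eq {ν : Measure ℝ} (hν : ν ≤ volume) (Δ : ℝ) :
    ∫ t, t * mixDensity μ1 μ2 Δ t ∂ν =
      pHead ((μ2 - μ1) / 2) Δ * ∫ t, t * stdGauss (t - μ1) ∂ν +
        pTail ((μ2 - μ1) / 2) Δ * ∫ t, t * stdGauss (t - μ2) ∂ν := by
  simp only [mixDensity, mul_add, mul_left_comm _ (pHead _ _), mul_left_comm _ (pTail _ _)]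
  rw [integral_add, integral_const_mul, integral_const_mul]
  all_goals exact ((integrable_mul_stdGauss_sub _).mono_measure hν).const_mul _

lemma integrable_mixDensity (Δ : ℝ) : Integrable (mixDensity μ1 μ2 Δ) :=
  ((integrable_stdGauss.comp_sub_right μ1).const_mul _).add
    ((integrable_stdGauss.comp_sub_right μ2).const_mul _)

lemma integrable_mul_mixDensity (Δ : ℝ) : Integrable (fun t => t * mixDensity μ1 μ2 Δ t) :=
  (((integrable_mul_stdGauss_sub μ1).const_mul (pHead ((μ2 - μ1) / 2) Δ)).add
    ((integrable_mul_stdGauss_sub μ2).const_mul (pTail ((μ2 - μ1) / 2) Δ))).congr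
    (ae_of_all _ fun t => by simp only [Pi.add_apply, mixDensity]; ring)

lemma integral_mixDensity (Δ : ℝ) : ∫ t, mixDensity μ1 μ2 Δ t = 1 := by
  rw [integral_mixDensity_eq μ1 μ2 le_rfl, integral_sub_right_eq_self stdGauss,
    integral_sub_right_eq_self stdGauss, integral_stdGauss, mul_one, mul_one, pHead_add_pTail]

lemma integral_mul_mixDensity (Δ : ℝ) :
    ∫ t, t * mixDensity μ1 μ2 Δ t =
      pHead ((μ2 - μ1) / 2) Δ * μ1 + pTail ((μ2 - μ1) / 2) Δ * μ2 := by
  rw [integral_mul_mixDensity_eq μ1 μ2 le_rfl, integral_mul_stdGauss_sub,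
    integral_mul_stdGauss_sub]

lemma hasDerivAt_integral_mul_mixDensity :
    HasDerivAt (fun Δ => ∫ t, t * mixDensity μ1 μ2 Δ t) (-((μ2 - μ1) / 2) ^ 2) 0 := by
  rw [funext (integral_mul_mixDensity μ1 μ2)]
  refine ((hasDerivAt_pHead _ 0).mul_const μ1).add ((hasDerivAt_pTail _ 0).mul_const μ2)
    |>.congr_deriv ?_
  rw [pHead_zero, pTail_zero]
  ring

noncomputable def leftMass (Δ : ℝ) : ℝ :=
  ∫ t in Iic ((μ1 + μ2) / 2 + Δ), mixDensity μ1 μ2 Δ t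

noncomputable def leftMoment (Δ : ℝ) : ℝ :=
  ∫ t in Iic ((μ1 + μ2) / 2 + Δ), t * mixDensity μ1 μ2 Δ t

lemma leftMass_eq (Δ : ℝ) :
    leftMass μ1 μ2 Δ =
      pHead ((μ2 - μ1) / 2) Δ * stdCDF ((μ2 - μ1) / 2 + Δ) +
        pTail ((μ2 - μ1) / 2) Δ * stdCDF (Δ - (μ2 - μ1) / 2) := by
  rw [leftMass, integral_mixDensity_eq μ1 μ2 Measure.restrict_le_self,
    integral_Iic_stdGauss_sub, integral_Iic_stdGauss_sub]
  ring_nf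

lemma leftMoment_eq (Δ : ℝ) :
    leftMoment μ1 μ2 Δ =
      pHead ((μ2 - μ1) / 2) Δ *
          (μ1 * stdCDF ((μ2 - μ1) / 2 + Δ) - stdGauss ((μ2 - μ1) / 2 + Δ)) +
        pTail ((μ2 - μ1) / 2) Δ *
          (μ2 * stdCDF (Δ - (μ2 - μ1) / 2) - stdGauss (Δ - (μ2 - μ1) / 2)) := by
  rw [leftMoment, integral_mul_mixDensity_eq μ1 μ2 Measure.restrict_le_self,
    integral_Iic_mul_stdGauss_sub, integral_Iic_mul_stdGauss_sub]
  ring_nf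

lemma mRight_eq (Δ : ℝ) :
    mRight μ1 μ2 Δ =
      ((∫ t, t * mixDensity μ1 μ2 Δ t) - leftMoment μ1 μ2 Δ) / (1 - leftMass μ1 μ2 Δ) := by
  have hmass := intervalIntegral.integral_Iic_add_Ioi (b := (μ1 + μ2) / 2 + Δ)
    (integrable_mixDensity μ1 μ2 Δ).integrableOn (integrable_mixDensity μ1 μ2 Δ).integrableOn
  have hmoment := intervalIntegral.integral_Iic_add_Ioi (b := (μ1 + μ2) / 2 + Δ)
    (integrable_mul_mixDensity μ1 μ2 Δ).integrableOn
    (integrable_mul_mixDensity μ1 μ2 Δ).integrableOn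
  rw [integral_mixDensity] at hmass
  rw [mRight, eq_sub_of_add_eq' hmass, eq_sub_of_add_eq' hmoment]
  rfl

lemma pbsUpdate_eq (Δ : ℝ) :
    pbsUpdate μ1 μ2 Δ = (leftMoment μ1 μ2 Δ / leftMass μ1 μ2 Δ +
      ((∫ t, t * mixDensity μ1 μ2 Δ t) - leftMoment μ1 μ2 Δ) / (1 - leftMass μ1 μ2 Δ)) / 2 := by
  rw [pbsUpdate, mRight_eq]
  rfl

lemma leftMass_zero : leftMass μ1 μ2 0 = 1 / 2 := by
  rw [leftMass_eq, pHead_zero, pTail_zero, zero_sub, add_zero, stdCDF_neg]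
  ring

lemma leftMoment_zero :
    leftMoment μ1 μ2 0 = (μ1 * stdCDF ((μ2 - μ1) / 2) + μ2 * (1 - stdCDF ((μ2 - μ1) / 2)) -
      2 * stdGauss ((μ2 - μ1) / 2)) / 2 := by
  rw [leftMoment_eq, pHead_zero, pTail_zero, zero_sub, add_zero, stdCDF_neg, stdGauss_neg]
  ring

lemma hasDerivAt_leftMass :
    HasDerivAt (leftMass μ1 μ2) (stdGauss ((μ2 - μ1) / 2) +
      (μ2 - μ1) / 2 * (2 * stdCDF ((μ2 - μ1) / 2) - 1) / 2) 0 := by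
  set x := (μ2 - μ1) / 2
  rw [funext (leftMass_eq μ1 μ2)]
  have hA := (hasDerivAt_stdCDF (x + 0)).comp_const_add x 0
  have hB := (hasDerivAt_stdCDF (0 - x)).comp_sub_const 0 x
  refine (((hasDerivAt_pHead x 0).mul hA).add ((hasDerivAt_pTail x 0).mul hB)).congr_deriv ?_
  rw [pHead_zero, pTail_zero, zero_sub, add_zero, stdCDF_neg, stdGauss_neg]
  ring

lemma differentiable_leftMoment : Differentiable ℝ (leftMoment μ1 μ2) := by
  have hp : Differentiable ℝ (pHead ((μ2 - μ1) / 2)) :=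
    fun Δ => (hasDerivAt_pHead _ Δ).differentiableAt
  have hq : Differentiable ℝ (pTail ((μ2 - μ1) / 2)) :=
    fun Δ => (hasDerivAt_pTail _ Δ).differentiableAt
  rw [funext (leftMoment_eq μ1 μ2)]
  have hΦ := differentiable_stdCDF
  have hφ := differentiable_stdGauss
  fun_prop

end Mixture

theorem pbsUpdate_hasDerivAt_zero_general (μ1 μ2 : ℝ) :
    HasDerivAt (fun Δ => pbsUpdate μ1 μ2 Δ) (contractionC ((μ2 - μ1) / 2)) 0 ∧
    (fun Δ => pbsUpdate μ1 μ2 Δ - (μ1 + μ2) / 2 - contractionC ((μ2 - μ1) / 2) * Δ)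
      =o[nhds (0 : ℝ)] (fun Δ => Δ) := by
  have hmean : ∫ t, t * mixDensity μ1 μ2 0 t = (μ1 + μ2) / 2 := by
    rw [integral_mul_mixDensity, pHead_zero, pTail_zero]
    ring
  have hderiv : HasDerivAt (fun Δ => pbsUpdate μ1 μ2 Δ) (contractionC ((μ2 - μ1) / 2)) 0 := by
    have h := hasDerivAt_avg_div_add_sub_div_one_sub_of_eq_half
      (differentiable_leftMoment μ1 μ2 0) (hasDerivAt_leftMass μ1 μ2)
      (hasDerivAt_integral_mul_mixDensity μ1 μ2) (leftMass_zero μ1 μ2)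
    rw [hmean, leftMoment_zero] at h
    rw [funext (pbsUpdate_eq μ1 μ2)]
    refine h.congr_deriv ?_
    rw [contractionC]
    ring
  have hvalue : pbsUpdate μ1 μ2 0 = (μ1 + μ2) / 2 := by
    rw [pbsUpdate_eq, leftMass_zero, hmean]
    ring
  refine ⟨hderiv, ?_⟩
  simpa [hvalue, mul_comm] using hasDerivAt_iff_isLittleO.mp hderiv

/-- The progressively-balanced-sampling update `Δ ↦ θ̂(Δ)` is differentiable at
`Δ = 0` with derivative `C(x)`, `x = (μ2−μ1)/2`; that is,
`θ̂(Δ) = θ* + C(x)·Δ + o(Δ)` as `Δ → 0`. -/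
theorem pbsUpdate_hasDerivAt_zero (μ1 μ2 : ℝ) (hμ : μ1 < μ2) :
    HasDerivAt (fun Δ => pbsUpdate μ1 μ2 Δ) (contractionC ((μ2 - μ1) / 2)) 0 ∧
    (fun Δ => pbsUpdate μ1 μ2 Δ - (μ1 + μ2) / 2 - contractionC ((μ2 - μ1) / 2) * Δ)
      =o[nhds (0 : ℝ)] (fun Δ => Δ) :=
  pbsUpdate_hasDerivAt_zero_general μ1 μ2
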